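/- Define a_0 = 1, a_1 = 3, a_2 = 6 and a_j = a_{j−1} + a_{j−2} + 2a_{j−3} for j ≥ 3. Then the sequence (a_j) does not satisfy any linear recursion with integer coefficients of order 1 or 2; i.e., there are no integers p, q (not both used trivially) with a_{j+2} = p·a_{j+1} + q·a_j for all j ≥ 0, and no integer p with a_{j+1} = p·a_j for all j ≥ 0. -/

import Mathlib

/-- The sequence `a_0=1, a_1=3, a_2=6, a_j = a_{j-1}+a_{j-2}+2a_{j-3}` satisfies
no integral linear recursion of order 1 or 2. -/
theorem stmt3 (a : ℕ → ℤ) (h0 : a 0 = 1) (h1 : a 1 = 3) (h2 : a 2 = 6)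
    (hrec : ∀ j, a (j + 3) = a (j + 2) + a (j + 1) + 2 * a j) :
    (¬ ∃ p q : ℤ, ∀ j, a (j + 2) = p * a (j + 1) + q * a j) ∧
    (¬ ∃ p : ℤ, ∀ j, a (j + 1) = p * a j) := by
  have h3 : a 3 = 11 := by rw [hrec 0, h0, h1, h2]; norm_num
  refine ⟨fun ⟨p, q, h⟩ => ?_, fun ⟨p, h⟩ => ?_⟩
  · -- `6 = 3p + q` and `11 = 6p + 3q` force `3p = 7`.
    have e0 := h 0
    have e1 := h 1
    rw [h0, h1, h2] at e0
    rw [h1, h2, h3] at e1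
    omega
  · -- `3 = p`, but then `6 = 3p = 9`.
    have e0 := h 0
    have e1 := h 1
    rw [h0, h1] at e0
    rw [h1, h2] at e1
    omega
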